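/- arXiv:1512.04462 — 3 statements merged into one kernel-verified Lean document; each statement's English description precedes it below -/
import Mathlib

section
/- For all parameters β, h, γ ≥ 0 and all Borel probability measures μ, ν on [0,1], the Monge–Kantorovich distance satisfies d(T_{β,h,γ}(μ), T_{β,h,γ}(ν)) ≤ (γ(e^β − 1)/4) · d(μ, ν). -/
open MeasureTheory Real

noncomputable section

/-- The unit interval `[0,1]` as a measurable space. -/
abbrev I01 := Set.Icc (0 : ℝ) 1

/-- The Monge–Kantorovich (Wasserstein-1) distance between two measures on `[0,1]`:
the infimum of `E|X - Y|` over all couplings. -/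
def MKdist (μ ν : Measure I01) : ℝ :=
  sInf {c | ∃ pr : Measure (I01 × I01), IsProbabilityMeasure pr ∧
    pr.fst = μ ∧ pr.snd = ν ∧ c = ∫ p, |(p.1 : ℝ) - (p.2 : ℝ)| ∂pr}

/-- The Poisson distribution with parameter `γ` on `ℕ`. -/
def poissonMeasure (γ : ℝ) : Measure ℕ :=
  Measure.sum fun n => ENNReal.ofReal (exp (-γ) * γ ^ n / n.factorial) • Measure.dirac n

/-- The value `(1 + e^{-h} ∏_{i<r} (1 - (1-e^{-β}) x_i)^{-1})^{-1}`, projected to `[0,1]`. -/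
def Tval (β h : ℝ) {r : ℕ} (x : Fin r → I01) : I01 :=
  Set.projIcc 0 1 zero_le_one
    ((1 + exp (-h) * (∏ i, (1 - (1 - exp (-β)) * (x i : ℝ)))⁻¹)⁻¹)

/-- The cavity operator `T_{β,h,γ}` on probability measures on `[0,1]`:
the law of `(1 + e^{-h} ∏_{i≤r} (1 - (1-e^{-β}) X_i)^{-1})^{-1}` where the `X_i`
are i.i.d. `ν`-distributed and `r` is an independent Poisson(γ) random variable. -/
def Tmap (β h γ : ℝ) (ν : Measure I01) : Measure I01 :=
  (poissonMeasure γ).bind fun r =>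
    Measure.map (fun x : Fin r → I01 => Tval β h x) (Measure.pi fun _ : Fin r => ν)

/-- The replica-symmetry constant `C(β,γ)`. -/
def Cconst (β γ : ℝ) : ℝ :=
  7 * (γ + γ ^ 3) * (exp (2 * β) - 1) * exp (γ * (exp (2 * β) - 1))

/-- Spin value of a Boolean. -/
def b2r (b : Bool) : ℝ := if b then 1 else 0

/-- Bernoulli measure on `Bool` with success probability `p`. -/
def bern (p : ℝ) : Measure Bool :=
  ENNReal.ofReal (1 - p) • Measure.dirac false + ENNReal.ofReal p • Measure.dirac true

/-- The disorder: i.i.d. Bernoulli(γ/N) variables `g i j` (only `i < j` is used). -/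
def disorderMeasure (N : ℕ) (γ : ℝ) : Measure (Fin N → Fin N → Bool) :=
  Measure.pi fun _ => Measure.pi fun _ => bern (γ / N)

/-- The Hamiltonian `H_{N,β,h,γ}(σ) = h Σ σ_i - β Σ_{i<j} g_{ij} σ_i σ_j`. -/
def Ham (N : ℕ) (β h : ℝ) (g : Fin N → Fin N → Bool) (σ : Fin N → Bool) : ℝ :=
  h * ∑ i, b2r (σ i) -
    β * ∑ i, ∑ j, (if i < j ∧ g i j = true then b2r (σ i) * b2r (σ j) else 0)

/-- The partition function. -/
def Zfun (N : ℕ) (β h : ℝ) (g : Fin N → Fin N → Bool) : ℝ :=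
  ∑ σ : Fin N → Bool, exp (Ham N β h g σ)

/-- Quenched Gibbs expectation `⟨f⟩`. -/
def gibbs (N : ℕ) (β h : ℝ) (g : Fin N → Fin N → Bool) (f : (Fin N → Bool) → ℝ) : ℝ :=
  (∑ σ : Fin N → Bool, f σ * exp (Ham N β h g σ)) / Zfun N β h g

/-- Expectation `⟨f⟩_Y` under the product measure on spins with marginals `⟨σ_i⟩_Y = Y i`. -/
def prodExp (k : ℕ) (Y : Fin k → ℝ) (f : (Fin k → Bool) → ℝ) : ℝ :=
  ∑ σ : Fin k → Bool, f σ * ∏ i, (if σ i then Y i else 1 - Y i)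

/-- Mean free energy `f_N(β,h,γ)`. -/
def freeEnergy (N : ℕ) (β h γ : ℝ) : ℝ :=
  ∫ g, (N : ℝ)⁻¹ * log (Zfun N β h g) ∂(disorderMeasure N γ)

/-- Unnormalized mean free energy `F_N(β,h,γ) = E log Z_N`. -/
def Fenergy (N : ℕ) (β h γ : ℝ) : ℝ :=
  ∫ g, log (Zfun N β h g) ∂(disorderMeasure N γ)

end

/-! On `[0,1]^r` the cavity map is `x ↦ σ (h + ∑ i, log (1 - (1 - e^{-β}) x_i))` with `σ` the
logistic function. Since `σ` is `1/4`-Lipschitz and each summand is `(e^β - 1)`-Lipschitz, the map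
is `(e^β - 1)/4`-Lipschitz for the `ℓ¹` distance. Given a coupling `ρ` of `μ` and `ν`, draw one
Poisson(`γ`) number `r` and `r` i.i.d. `ρ`-pairs, and apply the cavity map to both coordinates:
this couples `T μ` and `T ν` at cost at most `E r · (e^β - 1)/4 · cost ρ = γ (e^β - 1)/4 · cost ρ`.
Taking the infimum over `ρ` gives the bound. -/

lemma Real.abs_sigmoid_sub_sigmoid_le (s t : ℝ) : |sigmoid s - sigmoid t| ≤ |s - t| / 4 := by
  have hlip : LipschitzWith 4⁻¹ sigmoid := by
    refine lipschitzWith_of_nnnorm_deriv_le differentiable_sigmoid fun x => ?_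
    rw [← NNReal.coe_le_coe, coe_nnnorm, deriv_sigmoid, Real.norm_eq_abs, NNReal.coe_inv]
    have := sigmoid_nonneg x
    have := sigmoid_le_one x
    rw [abs_of_nonneg (by nlinarith)]
    push_cast
    nlinarith [sq_nonneg (2 * sigmoid x - 1)]
  have := hlip.dist_le_mul s t
  simpa [Real.dist_eq, div_eq_inv_mul] using this

lemma Real.abs_log_sub_log_le {m u v : ℝ} (hm : 0 < m) (hu : m ≤ u) (hv : m ≤ v) :
    |log u - log v| ≤ |u - v| / m := by
  have key : ∀ a b, m ≤ a → m ≤ b → log b - log a ≤ |a - b| / m := fun a b ha hb => by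
    have ha0 : 0 < a := hm.trans_le ha
    calc log b - log a = log (b / a) := (log_div (hm.trans_le hb).ne' ha0.ne').symm
      _ ≤ b / a - 1 := log_le_sub_one_of_pos (div_pos (hm.trans_le hb) ha0)
      _ = (b - a) / a := by field_simp
      _ ≤ |a - b| / a := by gcongr; rw [abs_sub_comm]; exact le_abs_self _
      _ ≤ |a - b| / m := by gcongr
  rw [abs_sub_le_iff]
  exact ⟨by simpa [abs_sub_comm] using key v u hv hu, key u v hu hv⟩

lemma inv_one_add_exp_neg_mul_inv_eq_sigmoid (h : ℝ) {P : ℝ} (hP : 0 < P) :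
    (1 + exp (-h) * P⁻¹)⁻¹ = sigmoid (h + log P) := by
  rw [sigmoid_def, neg_add, exp_add, exp_neg (log P), exp_log hP]

lemma exp_neg_le_one_sub_mul {β : ℝ} (hβ : 0 ≤ β) {z : ℝ} (hz : z ∈ Set.Icc (0 : ℝ) 1) :
    exp (-β) ≤ 1 - (1 - exp (-β)) * z := by
  have : exp (-β) ≤ 1 := exp_le_one_iff.mpr (neg_nonpos.mpr hβ)
  nlinarith [hz.1, hz.2]

lemma abs_log_one_sub_mul_sub_le {β : ℝ} (hβ : 0 ≤ β) {x y : ℝ} (hx : x ∈ Set.Icc (0 : ℝ) 1)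
    (hy : y ∈ Set.Icc (0 : ℝ) 1) :
    |log (1 - (1 - exp (-β)) * x) - log (1 - (1 - exp (-β)) * y)| ≤ (exp β - 1) * |x - y| := by
  have hε : 0 ≤ 1 - exp (-β) := by simpa using exp_le_one_iff.mpr (neg_nonpos.mpr hβ)
  calc _ ≤ |(1 - (1 - exp (-β)) * x) - (1 - (1 - exp (-β)) * y)| / exp (-β) :=
        Real.abs_log_sub_log_le (exp_pos _) (exp_neg_le_one_sub_mul hβ hx)
          (exp_neg_le_one_sub_mul hβ hy)
    _ = (exp β - 1) * |x - y| := by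
        rw [show (1 - (1 - exp (-β)) * x) - (1 - (1 - exp (-β)) * y) = (1 - exp (-β)) * (y - x)
          by ring, abs_mul, abs_of_nonneg hε, abs_sub_comm, exp_neg]
        field_simp

lemma abs_Tval_sub_Tval_le {β : ℝ} (hβ : 0 ≤ β) (h : ℝ) {r : ℕ} (x y : Fin r → I01) :
    |(Tval β h x : ℝ) - Tval β h y| ≤ (exp β - 1) / 4 * ∑ i, |(x i : ℝ) - y i| := by
  set L : I01 → ℝ := fun z => log (1 - (1 - exp (-β)) * z)
  have hval : ∀ x : Fin r → I01, (1 + exp (-h) * (∏ i, (1 - (1 - exp (-β)) * (x i : ℝ)))⁻¹)⁻¹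
      = sigmoid (h + ∑ i, L (x i)) := fun x => by
    have hpos : ∀ i, 0 < 1 - (1 - exp (-β)) * (x i : ℝ) := fun i =>
      (exp_pos _).trans_le (exp_neg_le_one_sub_mul hβ (x i).2)
    rw [inv_one_add_exp_neg_mul_inv_eq_sigmoid h (Finset.prod_pos fun i _ => hpos i),
      log_prod fun i _ => (hpos i).ne']
  calc |(Tval β h x : ℝ) - Tval β h y|
      ≤ |sigmoid (h + ∑ i, L (x i)) - sigmoid (h + ∑ i, L (y i))| := by
        rw [← hval, ← hval]; exact Set.abs_projIcc_sub_projIcc (h := zero_le_one)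
    _ ≤ |(h + ∑ i, L (x i)) - (h + ∑ i, L (y i))| / 4 := Real.abs_sigmoid_sub_sigmoid_le _ _
    _ = |∑ i, (L (x i) - L (y i))| / 4 := by rw [add_sub_add_left_eq_sub, Finset.sum_sub_distrib]
    _ ≤ (∑ i, (exp β - 1) * |(x i : ℝ) - y i|) / 4 := by
        gcongr
        refine (Finset.abs_sum_le_sum_abs _ _).trans (Finset.sum_le_sum fun i _ => ?_)
        exact abs_log_one_sub_mul_sub_le hβ (x i).2 (y i).2
    _ = (exp β - 1) / 4 * ∑ i, |(x i : ℝ) - y i| := by rw [← Finset.mul_sum]; ring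

lemma measurable_Tval (β h : ℝ) (r : ℕ) : Measurable (Tval β h : (Fin r → I01) → I01) := by
  unfold Tval
  fun_prop

lemma isProbabilityMeasure_poissonMeasure {γ : ℝ} (hγ : 0 ≤ γ) :
    IsProbabilityMeasure (poissonMeasure γ) := by
  lift γ to NNReal using hγ
  exact inferInstanceAs (IsProbabilityMeasure (ProbabilityTheory.poissonMeasure γ))

lemma hasSum_poisson_mul_self {γ : ℝ} (hγ : 0 ≤ γ) :
    HasSum (fun n : ℕ => exp (-γ) * γ ^ n / n.factorial * n) γ := by
  lift γ to NNReal using hγ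
  have h1 := (ProbabilityTheory.hasSum_one_poissonMeasure γ).mul_left (γ : ℝ)
  rw [mul_one] at h1
  have h2 := (hasSum_nat_add_iff (f := fun n : ℕ => exp (-γ) * γ ^ n / n.factorial * n) 1).mp
    (h1.congr_fun fun n => ?_)
  · simpa using h2
  · rw [Nat.factorial_succ]
    push_cast
    field_simp
    ring

lemma integral_poissonMeasure_bind {α : Type*} [MeasurableSpace α] {γ : ℝ} (hγ : 0 ≤ γ)
    {κ : ℕ → Measure α} {f : α → ℝ} (hf : Integrable f ((poissonMeasure γ).bind κ)) :
    ∫ x, f x ∂(poissonMeasure γ).bind κ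
      = ∑' n, exp (-γ) * γ ^ n / n.factorial * ∫ x, f x ∂κ n := by
  have hsum : (poissonMeasure γ).bind κ
      = Measure.sum fun n => ENNReal.ofReal (exp (-γ) * γ ^ n / n.factorial) • κ n := by
    rw [poissonMeasure, Measure.bind_sum _ _ .of_discrete]
    congr with n : 1
    rw [Measure.bind_smul, Measure.dirac_bind .of_discrete]
  rw [hsum] at hf ⊢
  rw [integral_sum_measure hf]
  congr with n
  rw [integral_smul_measure, ENNReal.toReal_ofReal (by positivity), smul_eq_mul]

theorem MeasureTheory.Measure.map_bind {α β δ : Type*} [MeasurableSpace α] [MeasurableSpace β]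
    [MeasurableSpace δ] (m : Measure α) {κ : α → Measure β} (hκ : Measurable κ) {g : β → δ}
    (hg : Measurable g) : (m.bind κ).map g = m.bind fun a => (κ a).map g := by
  rw [bind, ← join_map_map hg, map_map (measurable_map g hg) hκ]
  rfl

lemma fst_map_pi_pair {ι X₁ X₂ Y₁ Y₂ : Type*} [Fintype ι] [MeasurableSpace X₁]
    [MeasurableSpace X₂] [MeasurableSpace Y₁] [MeasurableSpace Y₂]
    {F : (ι → X₁) → Y₁} {G : (ι → X₂) → Y₂}
    (hF : Measurable F) (hG : Measurable G) (ρ : Measure (X₁ × X₂)) [IsFiniteMeasure ρ] :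
    ((Measure.pi fun _ : ι => ρ).map fun z => (F (Prod.fst ∘ z), G (Prod.snd ∘ z))).fst
      = (Measure.pi fun _ => ρ.fst).map F := by
  simp only [Measure.fst]
  rw [Measure.map_map measurable_fst (by fun_prop)]
  rw [← Measure.pi_map_pi (fun _ => measurable_fst.aemeasurable), Measure.map_map hF (by fun_prop)]
  rfl

lemma snd_map_pi_pair {ι X₁ X₂ Y₁ Y₂ : Type*} [Fintype ι] [MeasurableSpace X₁]
    [MeasurableSpace X₂] [MeasurableSpace Y₁] [MeasurableSpace Y₂]
    {F : (ι → X₁) → Y₁} {G : (ι → X₂) → Y₂}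
    (hF : Measurable F) (hG : Measurable G) (ρ : Measure (X₁ × X₂)) [IsFiniteMeasure ρ] :
    ((Measure.pi fun _ : ι => ρ).map fun z => (F (Prod.fst ∘ z), G (Prod.snd ∘ z))).snd
      = (Measure.pi fun _ => ρ.snd).map G := by
  simp only [Measure.snd]
  rw [Measure.map_map measurable_snd (by fun_prop)]
  rw [← Measure.pi_map_pi (fun _ => measurable_snd.aemeasurable), Measure.map_map hG (by fun_prop)]
  rfl

noncomputable def transportCost (ρ : Measure (I01 × I01)) : ℝ := ∫ p, |(p.1 : ℝ) - p.2| ∂ρ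

lemma transportCost_nonneg (ρ : Measure (I01 × I01)) : 0 ≤ transportCost ρ :=
  integral_nonneg fun _ => abs_nonneg _

lemma integrable_abs_sub (ρ : Measure (I01 × I01)) [IsFiniteMeasure ρ] :
    Integrable (fun p : I01 × I01 => |(p.1 : ℝ) - p.2|) ρ :=
  .of_bound (by fun_prop) 1 <| ae_of_all _ fun p => by
    rw [norm_abs_eq_norm, Real.norm_eq_abs, abs_sub_le_iff]
    constructor <;> linarith [p.1.2.1, p.1.2.2, p.2.2.1, p.2.2.2]

lemma MKdist_le_transportCost {μ ν : Measure I01} {ρ : Measure (I01 × I01)}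
    (hρ : IsProbabilityMeasure ρ) (hfst : ρ.fst = μ) (hsnd : ρ.snd = ν) :
    MKdist μ ν ≤ transportCost ρ :=
  csInf_le ⟨0, by rintro _ ⟨ρ', -, -, -, rfl⟩; exact transportCost_nonneg ρ'⟩
    ⟨ρ, hρ, hfst, hsnd, rfl⟩

lemma MKdist_le_mul_MKdist {μ ν μ' ν' : Measure I01} [IsProbabilityMeasure μ]
    [IsProbabilityMeasure ν] {L : ℝ} (hL : 0 ≤ L)
    (h : ∀ ρ : Measure (I01 × I01), IsProbabilityMeasure ρ → ρ.fst = μ → ρ.snd = ν →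
      MKdist μ' ν' ≤ L * transportCost ρ) :
    MKdist μ' ν' ≤ L * MKdist μ ν := by
  unfold MKdist
  rw [← smul_eq_mul, ← Real.sInf_smul_of_nonneg hL]
  refine le_csInf
    ⟨_, ⟨_, ⟨μ.prod ν, inferInstance, Measure.fst_prod, Measure.snd_prod, rfl⟩, rfl⟩⟩ ?_
  rintro _ ⟨_, ⟨ρ, hρ, hfst, hsnd, rfl⟩, rfl⟩
  exact h ρ hρ hfst hsnd

noncomputable def pairTval (β h : ℝ) {r : ℕ} (z : Fin r → I01 × I01) : I01 × I01 :=
  (Tval β h (Prod.fst ∘ z), Tval β h (Prod.snd ∘ z))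

noncomputable def Tcoupling (β h γ : ℝ) (ρ : Measure (I01 × I01)) : Measure (I01 × I01) :=
  (poissonMeasure γ).bind fun r => (Measure.pi fun _ : Fin r => ρ).map (pairTval β h)

lemma measurable_pairTval (β h : ℝ) (r : ℕ) :
    Measurable (pairTval β h : (Fin r → I01 × I01) → I01 × I01) :=
  ((measurable_Tval β h r).comp (by fun_prop)).prodMk ((measurable_Tval β h r).comp (by fun_prop))

section

variable {β h γ : ℝ} (ρ : Measure (I01 × I01))

lemma fst_Tcoupling [IsFiniteMeasure ρ] : (Tcoupling β h γ ρ).fst = Tmap β h γ ρ.fst := by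
  rw [Measure.fst, Tcoupling, Measure.map_bind _ .of_discrete measurable_fst]
  congr with r : 1
  exact fst_map_pi_pair (measurable_Tval β h r) (measurable_Tval β h r) ρ

lemma snd_Tcoupling [IsFiniteMeasure ρ] : (Tcoupling β h γ ρ).snd = Tmap β h γ ρ.snd := by
  rw [Measure.snd, Tcoupling, Measure.map_bind _ .of_discrete measurable_snd]
  congr with r : 1
  exact snd_map_pi_pair (measurable_Tval β h r) (measurable_Tval β h r) ρ

lemma isProbabilityMeasure_Tcoupling (hγ : 0 ≤ γ) [IsProbabilityMeasure ρ] :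
    IsProbabilityMeasure (Tcoupling β h γ ρ) :=
  have := isProbabilityMeasure_poissonMeasure hγ
  isProbabilityMeasure_bind .of_discrete <| ae_of_all _ fun r =>
    Measure.isProbabilityMeasure_map (measurable_pairTval β h r).aemeasurable

lemma transportCost_map_pairTval_le (hβ : 0 ≤ β) [IsProbabilityMeasure ρ] (r : ℕ) :
    transportCost ((Measure.pi fun _ : Fin r => ρ).map (pairTval β h))
      ≤ r * ((exp β - 1) / 4 * transportCost ρ) := by
  have hcoord : ∀ i : Fin r,
      Integrable (fun z : Fin r → I01 × I01 => |((z i).1 : ℝ) - (z i).2|)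
        (Measure.pi fun _ => ρ) :=
    fun i => integrable_comp_eval (μ := fun _ : Fin r => ρ) (integrable_abs_sub ρ)
  rw [transportCost, integral_map (measurable_pairTval β h r).aemeasurable
    (integrable_abs_sub _).aestronglyMeasurable]
  calc ∫ z, |((pairTval β h z).1 : ℝ) - (pairTval β h z).2| ∂(Measure.pi fun _ => ρ)
      ≤ ∫ z, (exp β - 1) / 4 * ∑ i, |((z i).1 : ℝ) - (z i).2| ∂(Measure.pi fun _ => ρ) :=
        integral_mono ((integrable_abs_sub _).comp_measurable (measurable_pairTval β h r))
          ((integrable_finsetSum _ fun i _ => hcoord i).const_mul _)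
          fun z => abs_Tval_sub_Tval_le hβ h _ _
    _ = (exp β - 1) / 4 *
          ∑ i : Fin r, ∫ z, |((z i).1 : ℝ) - (z i).2| ∂(Measure.pi fun _ => ρ) := by
        rw [integral_const_mul, integral_finsetSum _ fun i _ => hcoord i]
    _ = r * ((exp β - 1) / 4 * transportCost ρ) := by
        simp_rw [integral_comp_eval (μ := fun _ : Fin r => ρ)
          (integrable_abs_sub ρ).aestronglyMeasurable]
        simp only [Finset.sum_const, Finset.card_univ, Fintype.card_fin, nsmul_eq_mul]
        rw [transportCost]
        ring

lemma transportCost_Tcoupling_le (hβ : 0 ≤ β) (hγ : 0 ≤ γ) [IsProbabilityMeasure ρ] :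
    transportCost (Tcoupling β h γ ρ) ≤ γ * (exp β - 1) / 4 * transportCost ρ := by
  have := isProbabilityMeasure_Tcoupling (β := β) (h := h) ρ hγ
  set p : ℕ → ℝ := fun n => exp (-γ) * γ ^ n / n.factorial
  set K := (exp β - 1) / 4 * transportCost ρ
  have hmean : HasSum (fun n : ℕ => p n * n * K) (γ * K) :=
    (hasSum_poisson_mul_self hγ).mul_right K
  have hterm : ∀ n : ℕ,
      p n * transportCost ((Measure.pi fun _ : Fin n => ρ).map (pairTval β h)) ≤ p n * n * K :=
    fun n => by
      rw [mul_assoc]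
      exact mul_le_mul_of_nonneg_left (transportCost_map_pairTval_le ρ hβ n) (by positivity)
  calc transportCost (Tcoupling β h γ ρ)
      = ∑' n, p n * transportCost ((Measure.pi fun _ : Fin n => ρ).map (pairTval β h)) :=
        integral_poissonMeasure_bind hγ (integrable_abs_sub (Tcoupling β h γ ρ))
    _ ≤ ∑' n : ℕ, p n * n * K :=
        (Summable.of_nonneg_of_le (fun n => mul_nonneg (by positivity) (transportCost_nonneg _))
          hterm hmean.summable).tsum_le_tsum hterm hmean.summable
    _ = γ * (exp β - 1) / 4 * transportCost ρ := by rw [hmean.tsum_eq]; ring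

end

theorem T_operator_lipschitz_general (β h γ : ℝ) (hβ : 0 ≤ β) (hγ : 0 ≤ γ)
    (μ ν : Measure I01) (hμ : IsProbabilityMeasure μ) (hν : IsProbabilityMeasure ν) :
    MKdist (Tmap β h γ μ) (Tmap β h γ ν) ≤ γ * (Real.exp β - 1) / 4 * MKdist μ ν := by
  have hL : 0 ≤ γ * (exp β - 1) / 4 := by
    have := one_le_exp hβ
    positivity
  refine MKdist_le_mul_MKdist hL fun ρ hρ hfst hsnd => ?_
  calc MKdist (Tmap β h γ μ) (Tmap β h γ ν) ≤ transportCost (Tcoupling β h γ ρ) :=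
        MKdist_le_transportCost (isProbabilityMeasure_Tcoupling ρ hγ)
          (by rw [fst_Tcoupling, hfst]) (by rw [snd_Tcoupling, hsnd])
    _ ≤ γ * (exp β - 1) / 4 * transportCost ρ := transportCost_Tcoupling_le ρ hβ hγ

/-- For all parameters `β, h, γ ≥ 0` and all Borel probability measures `μ, ν`
on `[0,1]`, the Monge–Kantorovich distance satisfies
`d(T_{β,h,γ}(μ), T_{β,h,γ}(ν)) ≤ (γ (e^β − 1) / 4) · d(μ, ν)`. -/
theorem T_operator_lipschitz (β h γ : ℝ) (hβ : 0 ≤ β) (hh : 0 ≤ h) (hγ : 0 ≤ γ)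
    (μ ν : Measure I01) (hμ : IsProbabilityMeasure μ) (hν : IsProbabilityMeasure ν) :
    MKdist (Tmap β h γ μ) (Tmap β h γ ν) ≤ γ * (Real.exp β - 1) / 4 * MKdist μ ν :=
  T_operator_lipschitz_general β h γ hβ hγ μ ν hμ hν
end

section
/- Let N ≥ 2, β, h ≥ 0 and 0 ≤ γ ≤ N. Then, almost surely in the disorder, the Gibbs magnetization of the last spin satisfies ⟨σ_N⟩ = (1 + ⟨exp(h − β·Σ_{i≤N−1} g_{iN} σ_i)⟩_−^{−1})^{−1}, where ⟨·⟩_− is the quenched Gibbs expectation of the (N−1)-spin system with parameters β, h and dilution parameter γ' = (N−1)γ/N, built from the same disorder variables g_{ij}, 1 ≤ i < j ≤ N−1. -/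
open MeasureTheory Real

/-
The identity holds for every disorder configuration, not only almost surely. Splitting a
configuration of `N + 1` spins as `(τ, σ_{N+1})`, the Hamiltonian decomposes as
`H_{N+1}(τ, s) = H_N(τ) + s·(h − β Σ_i g_{i,N+1} τ_i)`. Hence `Z_{N+1} = S + Z_N` with
`S = Σ_τ exp(h − β Σ_i g_{i,N+1} τ_i) exp(H_N(τ))`, the numerator of `⟨σ_{N+1}⟩` is `S`, and
`⟨exp(h − β Σ_i g_{i,N+1} σ_i)⟩_− = S / Z_N`; the claim is `S / (S + Z_N) = (1 + Z_N / S)⁻¹`.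
-/

open Finset

theorem Fin.sum_fun_succ_eq_sum_snoc {α M : Type*} [Fintype α] [AddCommMonoid M] {n : ℕ}
    (f : (Fin (n + 1) → α) → M) :
    ∑ σ, f σ = ∑ a, ∑ τ : Fin n → α, f (Fin.snoc τ a) :=
  (Fintype.sum_equiv (Fin.snocEquiv fun _ => α) _ _ fun _ => rfl).symm.trans
    (Fintype.sum_prod_type _)

theorem div_add_eq_inv_one_add_inv_div {K : Type*} [DivisionRing K] {S Z : K} (hS : S ≠ 0) :
    S / (S + Z) = (1 + (S / Z)⁻¹)⁻¹ := by
  rw [inv_div, one_add_div hS, inv_div]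

section Cavity

variable {N : ℕ} (β h : ℝ) (g : Fin (N + 1) → Fin (N + 1) → Bool)

def restrictDisorder : Fin N → Fin N → Bool := fun i j => g i.castSucc j.castSucc

def cavityField (τ : Fin N → Bool) : ℝ :=
  ∑ i : Fin N, if g i.castSucc (Fin.last N) = true then b2r (τ i) else 0

noncomputable def cavityWeight : ℝ :=
  ∑ τ : Fin N → Bool, exp (h - β * cavityField g τ) * exp (Ham N β h (restrictDisorder g) τ)

theorem Ham_snoc (τ : Fin N → Bool) (s : Bool) :
    Ham (N + 1) β h g (Fin.snoc τ s) =
      Ham N β h (restrictDisorder g) τ + b2r s * (h - β * cavityField g τ) := by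
  have external : ∑ i : Fin (N + 1), b2r ((Fin.snoc τ s : Fin (N + 1) → Bool) i) =
      ∑ i : Fin N, b2r (τ i) + b2r s := by
    simp [Fin.sum_univ_castSucc]
  have last_not_lt : ∀ j : Fin N, ¬ Fin.last N < j.castSucc := fun j =>
    (Fin.castSucc_lt_last j).asymm
  have coupling : (∑ i : Fin (N + 1), ∑ j : Fin (N + 1), if i < j ∧ g i j = true then
        b2r ((Fin.snoc τ s : Fin (N + 1) → Bool) i) *
          b2r ((Fin.snoc τ s : Fin (N + 1) → Bool) j) else 0) =
      (∑ i : Fin N, ∑ j : Fin N, if i < j ∧ restrictDisorder g i j = true then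
        b2r (τ i) * b2r (τ j) else 0) + cavityField g τ * b2r s := by
    simp only [Fin.sum_univ_castSucc, Fin.snoc_castSucc, Fin.snoc_last,
      Fin.castSucc_lt_castSucc_iff, Fin.castSucc_lt_last, true_and, last_not_lt, lt_irrefl,
      false_and, if_false, add_zero, sum_const_zero, sum_add_distrib, cavityField, sum_mul,
      ite_mul, zero_mul]
    rfl
  rw [Ham, Ham, external, coupling]
  ring

theorem exp_Ham_snoc_true (τ : Fin N → Bool) :
    exp (Ham (N + 1) β h g (Fin.snoc τ true)) =
      exp (h - β * cavityField g τ) * exp (Ham N β h (restrictDisorder g) τ) := by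
  rw [Ham_snoc, b2r, if_pos rfl, one_mul, exp_add, mul_comm]

theorem Ham_snoc_false (τ : Fin N → Bool) :
    Ham (N + 1) β h g (Fin.snoc τ false) = Ham N β h (restrictDisorder g) τ := by
  rw [Ham_snoc, b2r, if_neg Bool.false_ne_true, zero_mul, add_zero]

theorem Zfun_succ :
    Zfun (N + 1) β h g = cavityWeight β h g + Zfun N β h (restrictDisorder g) := by
  simp only [Zfun, Fin.sum_fun_succ_eq_sum_snoc, Fintype.sum_bool, exp_Ham_snoc_true,
    Ham_snoc_false, cavityWeight]

theorem sum_last_spin_mul_exp_Ham :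
    ∑ σ : Fin (N + 1) → Bool, b2r (σ (Fin.last N)) * exp (Ham (N + 1) β h g σ) =
      cavityWeight β h g := by
  simp [Fin.sum_fun_succ_eq_sum_snoc, exp_Ham_snoc_true, b2r, cavityWeight]

theorem cavityWeight_pos : 0 < cavityWeight β h g :=
  sum_pos (fun _ _ => by positivity) univ_nonempty

theorem gibbs_last_spin :
    gibbs (N + 1) β h g (fun σ => b2r (σ (Fin.last N))) =
      (1 + (gibbs N β h (restrictDisorder g)
        (fun τ => exp (h - β * cavityField g τ)))⁻¹)⁻¹ := by
  rw [gibbs, gibbs, sum_last_spin_mul_exp_Ham, Zfun_succ]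
  exact div_add_eq_inv_one_add_inv_div (cavityWeight_pos β h g).ne'

end Cavity

theorem cavity_magnetization_general (N : ℕ) (β h γ : ℝ) :
    ∀ᵐ g ∂(disorderMeasure (N + 1) γ),
      gibbs (N + 1) β h g (fun σ => b2r (σ (Fin.last N))) =
      (1 + (gibbs N β h (fun i j => g i.castSucc j.castSucc)
        (fun σ => Real.exp (h - β * ∑ i : Fin N,
          (if g i.castSucc (Fin.last N) = true then b2r (σ i) else 0))))⁻¹)⁻¹ :=
  Filter.Eventually.of_forall (gibbs_last_spin β h)

/-- cavity identity for the magnetization of the last spin: for a system of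
`N+1 ≥ 2` spins, `β, h ≥ 0` and `0 ≤ γ ≤ N+1`, almost surely in the disorder,
`⟨σ_{N+1}⟩ = (1 + ⟨exp(h − β Σ_{i≤N} g_{i,N+1} σ_i)⟩_-⁻¹)⁻¹`, where `⟨·⟩_-` is the quenched
Gibbs expectation of the `N`-spin system (dilution `γ' = Nγ/(N+1)`, same edge probability)
built from the same disorder variables `g_{ij}`, `i < j ≤ N`. -/
theorem cavity_magnetization (N : ℕ) (hN : 1 ≤ N) (β h γ : ℝ)
    (hβ : 0 ≤ β) (hh : 0 ≤ h) (hγ0 : 0 ≤ γ) (hγ : γ ≤ (N : ℝ) + 1) :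
    ∀ᵐ g ∂(disorderMeasure (N + 1) γ),
      gibbs (N + 1) β h g (fun σ => b2r (σ (Fin.last N))) =
      (1 + (gibbs N β h (fun i j => g i.castSucc j.castSucc)
        (fun σ => Real.exp (h - β * ∑ i : Fin N,
          (if g i.castSucc (Fin.last N) = true then b2r (σ i) else 0))))⁻¹)⁻¹ :=
  cavity_magnetization_general N β h γ
end

section
/- Let n ∈ ℕ, p ∈ [0,1], β ≥ 0, let S be a Binomial(n,p)-distributed random variable and set α = n·p. Then E[S³·e^{βS}] ≤ (α³e^{3β} + 3α²e^{2β} + α·e^{β})·exp((e^{β}−1)·α). -/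
/-!
Write `s³ = s^(3) + 3 s^(2) + s^(1)` in falling factorials `s^(k) = s(s-1)⋯(s-k+1)`. The factor
`e^{βs}` turns the binomial weights into `C(n,s) aˢ bⁿ⁻ˢ` with `a = p e^β`, `b = 1 - p`, whose
`k`-th factorial moment is `n^(k) aᵏ (a + b)ⁿ⁻ᵏ`. Since `a + b = 1 + x` with `x = p (e^β - 1) ≥ 0`,
each moment is at most `(n a)ᵏ (1 + x)ⁿ ≤ (n p)ᵏ e^{kβ} e^{n x}`.
-/

open Real Finset

theorem Nat.choose_add_mul_descFactorial (n k i : ℕ) :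
    n.choose (k + i) * (k + i).descFactorial k = n.descFactorial k * (n - k).choose i := by
  have h := Nat.choose_mul (n := n) (Nat.le_add_right k i)
  rw [Nat.add_sub_cancel_left] at h
  rw [Nat.descFactorial_eq_factorial_mul_choose, Nat.descFactorial_eq_factorial_mul_choose,
    mul_left_comm, h, mul_assoc]

theorem Nat.cube_eq_descFactorial (s : ℕ) :
    s ^ 3 = s.descFactorial 3 + 3 * s.descFactorial 2 + s.descFactorial 1 := by
  rcases s with _ | _ | _ | m
  iterate 3 rfl
  simp only [Nat.descFactorial_succ, Nat.reduceSubDiff, add_tsub_cancel_right, tsub_zero,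
    Nat.descFactorial_zero, mul_one]
  ring

theorem sum_choose_mul_pow_mul_pow_mul_descFactorial {R : Type*} [CommSemiring R]
    (n k : ℕ) (a b : R) :
    ∑ s ∈ range (n + 1), (n.choose s : R) * a ^ s * b ^ (n - s) * (s.descFactorial k : R) =
      n.descFactorial k * a ^ k * (a + b) ^ (n - k) := by
  rcases le_or_gt k n with hkn | hnk
  · obtain ⟨m, rfl⟩ := Nat.exists_eq_add_of_le hkn
    have hlow : ∀ s ∈ range k, (s.descFactorial k : R) = 0 := fun s hs ↦ by
      rw [Nat.descFactorial_eq_zero_iff_lt.mpr (mem_range.mp hs), Nat.cast_zero]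
    rw [add_assoc, sum_range_add, sum_eq_zero (fun s hs ↦ by rw [hlow s hs, mul_zero]),
      zero_add, Nat.add_sub_cancel_left, add_pow, mul_sum]
    refine sum_congr rfl fun i _ ↦ ?_
    rw [Nat.add_sub_add_left, pow_add]
    calc (((k + m).choose (k + i) : ℕ) : R) * (a ^ k * a ^ i) * b ^ (m - i) *
          ((k + i).descFactorial k : R)
        = ((k + m).choose (k + i) * (k + i).descFactorial k : ℕ) * a ^ k * a ^ i *
            b ^ (m - i) := by push_cast; ring
      _ = _ := by rw [Nat.choose_add_mul_descFactorial, Nat.add_sub_cancel_left]; push_cast; ring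
  · rw [Nat.descFactorial_eq_zero_iff_lt.mpr hnk, Nat.cast_zero, zero_mul, zero_mul]
    refine sum_eq_zero fun s hs ↦ ?_
    rw [Nat.descFactorial_eq_zero_iff_lt.mpr ((mem_range.mp hs).trans_le hnk), Nat.cast_zero,
      mul_zero]

theorem sum_choose_mul_pow_mul_pow_mul_cube {R : Type*} [CommSemiring R] (n : ℕ) (a b : R) :
    ∑ s ∈ range (n + 1), (n.choose s : R) * a ^ s * b ^ (n - s) * (s : R) ^ 3 =
      n.descFactorial 3 * a ^ 3 * (a + b) ^ (n - 3) +
        3 * (n.descFactorial 2 * a ^ 2 * (a + b) ^ (n - 2)) +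
        n.descFactorial 1 * a ^ 1 * (a + b) ^ (n - 1) := by
  simp only [← sum_choose_mul_pow_mul_pow_mul_descFactorial, mul_sum, ← sum_add_distrib]
  refine sum_congr rfl fun s _ ↦ ?_
  rw [← Nat.cast_pow, Nat.cube_eq_descFactorial]
  push_cast
  ring

theorem descFactorial_mul_pow_mul_one_add_pow_le (n k : ℕ) {a x : ℝ} (ha : 0 ≤ a)
    (hx : 0 ≤ x) :
    n.descFactorial k * a ^ k * (1 + x) ^ (n - k) ≤ (n * a) ^ k * exp (n * x) := by
  have hfall : (n.descFactorial k : ℝ) * a ^ k ≤ (n * a) ^ k := by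
    rw [mul_pow]
    gcongr
    exact_mod_cast Nat.descFactorial_le_pow n k
  have hpow : (1 + x) ^ (n - k) ≤ exp (n * x) :=
    calc (1 + x) ^ (n - k) ≤ (1 + x) ^ n := pow_le_pow_right₀ (by linarith) (Nat.sub_le n k)
      _ ≤ exp x ^ n := by gcongr; linarith [add_one_le_exp x]
      _ = exp (n * x) := (exp_nat_mul x n).symm
  exact mul_le_mul hfall hpow (by positivity) (by positivity)

theorem binomial_cubic_exponential_moment_general (n : ℕ) (p : ℝ) (hp0 : 0 ≤ p)
    (β : ℝ) (hβ : 0 ≤ β) :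
    ∑ s ∈ Finset.range (n + 1),
        (n.choose s : ℝ) * p ^ s * (1 - p) ^ (n - s) * (s : ℝ) ^ 3 * exp (β * s) ≤
      (((n : ℝ) * p) ^ 3 * exp (3 * β) + 3 * ((n : ℝ) * p) ^ 2 * exp (2 * β) +
          (n : ℝ) * p * exp β) * exp ((exp β - 1) * ((n : ℝ) * p)) := by
  set x := p * (exp β - 1)
  have ha : 0 ≤ p * exp β := by positivity
  have hx : 0 ≤ x := mul_nonneg hp0 (by linarith [one_le_exp hβ])
  have hab : p * exp β + (1 - p) = 1 + x := by ring
  have hexp : ∀ k : ℕ, exp (k * β) = exp β ^ k := fun k ↦ exp_nat_mul β k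
  have hsum : ∑ s ∈ range (n + 1),
      (n.choose s : ℝ) * p ^ s * (1 - p) ^ (n - s) * (s : ℝ) ^ 3 * exp (β * s) =
      ∑ s ∈ range (n + 1),
        (n.choose s : ℝ) * (p * exp β) ^ s * (1 - p) ^ (n - s) * (s : ℝ) ^ 3 :=
    sum_congr rfl fun s _ ↦ by rw [mul_comm β, hexp, mul_pow]; ring
  have hterm := fun k ↦ descFactorial_mul_pow_mul_one_add_pow_le n k ha hx
  rw [hsum, sum_choose_mul_pow_mul_pow_mul_cube, hab]
  have h3 : exp (3 * β) = exp β ^ 3 := by exact_mod_cast hexp 3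
  have h2 : exp (2 * β) = exp β ^ 2 := by exact_mod_cast hexp 2
  have hnx : (n : ℝ) * x = (exp β - 1) * (n * p) := by ring
  rw [h3, h2, ← hnx]
  linear_combination hterm 3 + 3 * hterm 2 + hterm 1

/-- if `S` is Binomial(n,p)-distributed and `α = n·p`, then
`E[S³ e^{βS}] ≤ (α³e^{3β} + 3α²e^{2β} + α e^{β}) exp((e^{β}−1)α)`.
The expectation is written out explicitly via the binomial distribution:
`E[S³ e^{βS}] = Σ_{s=0}^{n} C(n,s) p^s (1−p)^{n−s} s³ e^{βs}`. -/
theorem binomial_cubic_exponential_moment (n : ℕ) (p : ℝ) (hp0 : 0 ≤ p) (hp1 : p ≤ 1)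
    (β : ℝ) (hβ : 0 ≤ β) :
    ∑ s ∈ Finset.range (n + 1),
        (n.choose s : ℝ) * p ^ s * (1 - p) ^ (n - s) * (s : ℝ) ^ 3 * exp (β * s) ≤
      (((n : ℝ) * p) ^ 3 * exp (3 * β) + 3 * ((n : ℝ) * p) ^ 2 * exp (2 * β) +
          (n : ℝ) * p * exp β) * exp ((exp β - 1) * ((n : ℝ) * p)) :=
  binomial_cubic_exponential_moment_general n p hp0 β hβ
end
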